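/- ('Random is hard' counting lemma) Fix n, a threshold d ≤ n/2, and a leakage length ℓ. For a function A : {0,1}^{≤ℓ} → probability distributions on {0,1}^n, call r ∈ {0,1}^n 'bad' if there exists w ∈ {0,1}^{≤ℓ} such that the probability under A(w) of landing within Hamming distance d of r is at least 1/(2n). Then the number of bad strings is at most 2^(ℓ+1) · 2n · 2^(n·H(d/n)+O(1)), so a uniformly random r is bad with probability at most n · 2^(n·(H(d/n)−1) + ℓ + O(1)). -/

import Mathlib

/-- The binary entropy function. -/
noncomputable def binEnt (p : ℝ) : ℝ :=
  p * Real.logb 2 (1 / p) + (1 - p) * Real.logb 2 (1 / (1 - p))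

/-- Strings of length at most `ℓ`. -/
def ShortStr (ℓ : ℕ) := Σ k : Fin (ℓ + 1), (Fin k → Bool)

instance (ℓ : ℕ) : Fintype (ShortStr ℓ) := by unfold ShortStr; infer_instance

open Finset Real

lemma shortstr_card_le (ℓ : ℕ) : Fintype.card (ShortStr ℓ) ≤ 2 ^ (ℓ + 1) := by
  have h1 : Fintype.card (ShortStr ℓ) = ∑ k : Fin (ℓ+1), 2 ^ (k : ℕ) := by
    unfold ShortStr
    rw [Fintype.card_sigma]
    exact Finset.sum_congr rfl fun k _ => by simp [Fintype.card_fun]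
  rw [h1, Fin.sum_univ_eq_sum_range (fun k => 2 ^ k)]
  have : ∀ m : ℕ, ∑ k ∈ Finset.range m, 2 ^ k < 2 ^ m := by
    intro m
    induction m with
    | zero => simp
    | succ m ih => rw [Finset.sum_range_succ]; omega
  exact (this (ℓ+1)).le



lemma ball_vol_le (n d : ℕ) (hd : 0 < d) (hdn : 2 * d ≤ n) :
    (∑ i ∈ Finset.range (d+1), (n.choose i : ℝ)) ≤
      (2:ℝ) ^ ((n:ℝ) * binEnt ((d:ℝ)/(n:ℝ))) := by
  have hn : 0 < n := lt_of_lt_of_le (by omega) hdn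
  have hnR : (0:ℝ) < n := by exact_mod_cast hn
  set p : ℝ := (d:ℝ)/(n:ℝ) with hp
  have hp0 : 0 < p := div_pos (by exact_mod_cast hd) hnR
  have hdle : d ≤ n := by omega
  have hp2 : p ≤ 1/2 := by
    have h2d : (2:ℝ)*d ≤ n := by exact_mod_cast hdn
    rw [hp, div_le_div_iff₀ hnR (by norm_num)]
    linarith
  have h1p : 0 < 1 - p := by linarith
  have hple : p ≤ 1 - p := by linarith
  -- rewrite the entropy power as a product
  have hnp : (n:ℝ) * p = d := by
    rw [hp]; field_simp
  have hnp1 : (n:ℝ) * (1 - p) = (n:ℝ) - d := by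
    rw [mul_sub, hnp, mul_one]
  have key : (2:ℝ) ^ ((n:ℝ) * binEnt p) = (1/p)^(d:ℕ) * (1/(1-p))^((n-d : ℕ)) := by
    rw [binEnt, mul_add, ← mul_assoc, ← mul_assoc, hnp, hnp1,
      Real.rpow_add (by norm_num)]
    congr 1
    · rw [mul_comm, Real.rpow_mul (by norm_num), Real.rpow_logb (by norm_num) (by norm_num) (by positivity), Real.rpow_natCast]
    · rw [mul_comm, Real.rpow_mul (by norm_num), Real.rpow_logb (by norm_num) (by norm_num) (by positivity)]
      rw [show ((n:ℝ) - d) = ((n - d : ℕ) : ℝ) by push_cast [hdle]; ring,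
        Real.rpow_natCast]
  rw [key]
  -- suffices: sum * p^d (1-p)^(n-d) ≤ 1
  have hpos : (0:ℝ) < p^d * (1-p)^(n-d) := by positivity
  rw [one_div, one_div, inv_pow, inv_pow, ← mul_inv]
  rw [← one_div, le_div_iff₀ hpos]
  -- each term bound
  have term_le : ∀ i ∈ Finset.range (d+1),
      (n.choose i : ℝ) * (p^d * (1-p)^(n-d)) ≤ (n.choose i : ℝ) * (p^i * (1-p)^(n-i)) := by
    intro i hi
    rw [Finset.mem_range] at hi
    have hi' : i ≤ d := by omega
    apply mul_le_mul_of_nonneg_left _ (by positivity)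
    have hsplit : p^d = p^i * p^(d-i) := by rw [← pow_add]; congr 1; omega
    have hsplit2 : (1-p)^(n-i) = (1-p)^(d-i) * (1-p)^(n-d) := by
      rw [← pow_add]; congr 1; omega
    rw [hsplit, hsplit2, mul_assoc]
    apply mul_le_mul_of_nonneg_left _ (by positivity)
    apply mul_le_mul_of_nonneg_right _ (by positivity)
    exact pow_le_pow_left₀ hp0.le hple _
  rw [Finset.sum_mul]
  calc ∑ i ∈ Finset.range (d+1), (n.choose i : ℝ) * (p^d * (1-p)^(n-d))
      ≤ ∑ i ∈ Finset.range (d+1), (n.choose i : ℝ) * (p^i * (1-p)^(n-i)) :=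
        Finset.sum_le_sum term_le
    _ ≤ ∑ i ∈ Finset.range (n+1), (n.choose i : ℝ) * (p^i * (1-p)^(n-i)) := by
        apply Finset.sum_le_sum_of_subset_of_nonneg
        · exact Finset.range_subset_range.2 (by omega)
        · intro i _ _; positivity
    _ = 1 := by
        have := add_pow p (1-p) n
        simp only [add_sub_cancel, one_pow] at this
        conv_rhs => rw [this]
        exact Finset.sum_congr rfl fun i _ => by ring

lemma hd_card (n : ℕ) (y r : Fin n → Bool) :
    hammingDist y r = (univ.filter fun j => y j ≠ r j).card := rfl

lemma fiber_card_le (n i : ℕ) (y : Fin n → Bool) :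
    (univ.filter (fun r : Fin n → Bool => hammingDist y r = i)).card ≤ n.choose i := by
  have := Finset.card_le_card_of_injOn
    (f := fun r : Fin n → Bool => univ.filter (fun j => y j ≠ r j))
    (s := univ.filter (fun r : Fin n → Bool => hammingDist y r = i))
    (t := Finset.powersetCard i (univ : Finset (Fin n)))
    (by intro r hr
        rw [Finset.mem_coe, Finset.mem_filter] at hr
        rw [Finset.mem_coe, Finset.mem_powersetCard]
        exact ⟨Finset.subset_univ _, by rw [← hd_card]; exact hr.2⟩)
    (by intro r _ r' _ h
        funext j
        have hj := Finset.ext_iff.mp h j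
        simp only [Finset.mem_filter, Finset.mem_univ, true_and] at hj
        revert hj; cases y j <;> cases r j <;> cases r' j <;> simp)
  simpa [Finset.card_powersetCard] using this

lemma ball_card_le (n d : ℕ) (y : Fin n → Bool) :
    ((univ.filter (fun r : Fin n → Bool => hammingDist y r ≤ d)).card : ℝ) ≤
      ∑ i ∈ range (d+1), (n.choose i : ℝ) := by
  have hcard : (univ.filter (fun r : Fin n → Bool => hammingDist y r ≤ d)).card
      = ∑ i ∈ range (d+1), ((univ.filter (fun r : Fin n → Bool => hammingDist y r ≤ d)).filter
          (fun r => hammingDist y r = i)).card := by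
    apply Finset.card_eq_sum_card_fiberwise
    intro r hr
    rw [Finset.mem_coe, Finset.mem_filter] at hr
    rw [Finset.mem_coe, Finset.mem_range]
    omega
  rw [hcard]
  push_cast
  apply Finset.sum_le_sum
  intro i _
  have : ((univ.filter (fun r : Fin n → Bool => hammingDist y r ≤ d)).filter
      (fun r => hammingDist y r = i)).card ≤
      (univ.filter (fun r : Fin n → Bool => hammingDist y r = i)).card := by
    apply Finset.card_le_card
    intro r hr
    rw [Finset.mem_filter] at hr ⊢
    exact ⟨Finset.mem_univ _, hr.2⟩
  exact_mod_cast le_trans this (fiber_card_le n i y)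

lemma per_w_bound (n d : ℕ) (hn : 0 < n) (μ : (Fin n → Bool) → ℝ)
    (hpos : ∀ y, 0 ≤ μ y) (hsum : ∑ y : Fin n → Bool, μ y = 1) :
    ((univ.filter (fun r : Fin n → Bool =>
        (1 : ℝ) / (2 * n) ≤ ∑ y ∈ univ.filter (fun y => hammingDist y r ≤ d), μ y)).card : ℝ)
      ≤ 2 * n * ∑ i ∈ range (d+1), (n.choose i : ℝ) := by
  set V : ℝ := ∑ i ∈ range (d+1), (n.choose i : ℝ) with hV
  have hnR : (0:ℝ) < n := by exact_mod_cast hn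
  set mass : (Fin n → Bool) → ℝ :=
    fun r => ∑ y ∈ univ.filter (fun y => hammingDist y r ≤ d), μ y with hmass
  have hmass_nonneg : ∀ r, 0 ≤ mass r := fun r =>
    Finset.sum_nonneg fun y _ => hpos y
  have swap : ∑ r : Fin n → Bool, mass r
      = ∑ y : Fin n → Bool, μ y * ((univ.filter (fun r => hammingDist y r ≤ d)).card : ℝ) := by
    simp_rw [hmass, Finset.sum_filter]
    rw [Finset.sum_comm]
    apply Finset.sum_congr rfl
    intro y _
    rw [← Finset.sum_filter, Finset.sum_const, nsmul_eq_mul, mul_comm]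
  have total : ∑ r : Fin n → Bool, mass r ≤ V := by
    rw [swap]
    calc ∑ y : Fin n → Bool, μ y * ((univ.filter (fun r => hammingDist y r ≤ d)).card : ℝ)
        ≤ ∑ y : Fin n → Bool, μ y * V := by
          apply Finset.sum_le_sum
          intro y _
          exact mul_le_mul_of_nonneg_left (ball_card_le n d y) (hpos y)
      _ = V := by rw [← Finset.sum_mul, hsum, one_mul]
  set B := univ.filter (fun r : Fin n → Bool => (1 : ℝ) / (2 * n) ≤ mass r) with hB
  have hBle : (B.card : ℝ) * (1 / (2 * n)) ≤ V := by
    calc (B.card : ℝ) * (1 / (2 * n)) = ∑ _r ∈ B, (1 : ℝ) / (2 * n) := by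
          rw [Finset.sum_const, nsmul_eq_mul]
      _ ≤ ∑ r ∈ B, mass r := by
          apply Finset.sum_le_sum
          intro r hr
          exact (Finset.mem_filter.mp hr).2
      _ ≤ ∑ r : Fin n → Bool, mass r := by
          apply Finset.sum_le_sum_of_subset_of_nonneg (Finset.subset_univ _)
          intro r _ _
          exact hmass_nonneg r
      _ ≤ V := total
  have h2n : (0:ℝ) < 2 * n := by positivity
  calc (B.card : ℝ) = (B.card : ℝ) * (1 / (2 * n)) * (2 * n) := by field_simp
    _ ≤ V * (2 * n) := mul_le_mul_of_nonneg_right hBle h2n.le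
    _ = 2 * n * V := by ring

open Finset in
/-- "Random is hard" counting lemma: if `A` maps each leakage string `w` of
length at most `ℓ` to a probability distribution on `{0,1}^n`, and `r` is
"bad" when some `A(w)` puts mass at least `1/(2n)` on the Hamming ball of
radius `d` around `r`, then there are at most `2^(ℓ+1) · 2n · 2^(n·H(d/n)+O(1))`
bad strings, so a uniform `r` is bad with probability at most
`n · 2^(n·(H(d/n)−1) + ℓ + O(1))`. -/
theorem random_is_hard_counting :
    ∃ C : ℝ, ∀ (n ℓ d : ℕ) (A : ShortStr ℓ → (Fin n → Bool) → ℝ),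
      0 < n → 0 < d → 2 * d ≤ n →
      (∀ w y, 0 ≤ A w y) → (∀ w, ∑ y : Fin n → Bool, A w y = 1) →
      ((Set.ncard {r : Fin n → Bool | ∃ w,
            (1 : ℝ) / (2 * n) ≤
              ∑ y ∈ univ.filter (fun y => hammingDist y r ≤ d), A w y} : ℝ) ≤
          (2 : ℝ) ^ (ℓ + 1) * (2 * n) *
            (2 : ℝ) ^ ((n : ℝ) * binEnt ((d : ℝ) / (n : ℝ)) + C)) ∧
      ((Set.ncard {r : Fin n → Bool | ∃ w,
            (1 : ℝ) / (2 * n) ≤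
              ∑ y ∈ univ.filter (fun y => hammingDist y r ≤ d), A w y} : ℝ) /
            (2 : ℝ) ^ n ≤
          (n : ℝ) *
            (2 : ℝ) ^ ((n : ℝ) * (binEnt ((d : ℝ) / (n : ℝ)) - 1) + ℓ + C)) := by
  classical
  refine ⟨2, fun n ℓ d A hn hd hdn hApos hAsum => ?_⟩
  set H : ℝ := binEnt ((d : ℝ) / (n : ℝ)) with hH
  set V : ℝ := ∑ i ∈ range (d+1), (n.choose i : ℝ) with hV
  set P : (Fin n → Bool) → Prop := fun r => ∃ w,
      (1 : ℝ) / (2 * n) ≤ ∑ y ∈ univ.filter (fun y => hammingDist y r ≤ d), A w y with hP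
  have hset : {r : Fin n → Bool | P r} = ↑(univ.filter P) := by
    ext r; simp
  have hncard : (Set.ncard {r : Fin n → Bool | P r} : ℝ) = ((univ.filter P).card : ℝ) := by
    rw [hset, Set.ncard_coe_finset]
  -- core bound
  have hcore : ((univ.filter P).card : ℝ) ≤ (2:ℝ) ^ (ℓ+1) * (2 * n) * (2:ℝ) ^ ((n:ℝ) * H) := by
    have hsub : univ.filter P ⊆ Finset.biUnion univ (fun w : ShortStr ℓ =>
        univ.filter (fun r : Fin n → Bool =>
          (1 : ℝ) / (2 * n) ≤ ∑ y ∈ univ.filter (fun y => hammingDist y r ≤ d), A w y)) := by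
      intro r hr
      obtain ⟨w, hw⟩ := (Finset.mem_filter.mp hr).2
      exact Finset.mem_biUnion.mpr ⟨w, Finset.mem_univ _, Finset.mem_filter.mpr ⟨Finset.mem_univ _, hw⟩⟩
    have hcard1 : ((univ.filter P).card : ℝ) ≤
        ∑ w : ShortStr ℓ, ((univ.filter (fun r : Fin n → Bool =>
          (1 : ℝ) / (2 * n) ≤ ∑ y ∈ univ.filter (fun y => hammingDist y r ≤ d), A w y)).card : ℝ) := by
      have := le_trans (Finset.card_le_card hsub) (Finset.card_biUnion_le)
      exact_mod_cast this
    have hcard2 : ((univ.filter P).card : ℝ) ≤ ∑ _w : ShortStr ℓ, 2 * (n:ℝ) * V :=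
      le_trans hcard1 (Finset.sum_le_sum fun w _ => per_w_bound n d hn (A w) (hApos w) (hAsum w))
    rw [Finset.sum_const, nsmul_eq_mul] at hcard2
    have hV2 : V ≤ (2:ℝ) ^ ((n:ℝ) * H) := ball_vol_le n d hd hdn
    have hVpos : 0 ≤ V := Finset.sum_nonneg fun i _ => by positivity
    have hws : (Fintype.card (ShortStr ℓ) : ℝ) ≤ (2:ℝ) ^ (ℓ+1) := by
      exact_mod_cast shortstr_card_le ℓ
    calc ((univ.filter P).card : ℝ) ≤ (Fintype.card (ShortStr ℓ) : ℝ) * (2 * n * V) := by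
          simpa using hcard2
      _ ≤ (2:ℝ) ^ (ℓ+1) * (2 * n * V) := by
          apply mul_le_mul_of_nonneg_right hws (by positivity)
      _ ≤ (2:ℝ) ^ (ℓ+1) * (2 * n * (2:ℝ) ^ ((n:ℝ) * H)) := by
          apply mul_le_mul_of_nonneg_left _ (by positivity)
          exact mul_le_mul_of_nonneg_left hV2 (by positivity)
      _ = (2:ℝ) ^ (ℓ+1) * (2 * n) * (2:ℝ) ^ ((n:ℝ) * H) := by ring
  constructor
  · rw [hncard]
    refine le_trans hcore ?_
    apply mul_le_mul_of_nonneg_left _ (by positivity)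
    apply Real.rpow_le_rpow_of_exponent_le (by norm_num)
    linarith
  · rw [hncard]
    have h2n : (0:ℝ) < (2:ℝ) ^ n := by positivity
    rw [div_le_iff₀ h2n]
    refine le_trans hcore (le_of_eq ?_)
    have e1 : ((2:ℝ) ^ (ℓ+1) : ℝ) = (2:ℝ) ^ ((ℓ:ℝ) + 1) := by
      rw [← Real.rpow_natCast 2 (ℓ+1)]; push_cast; ring_nf
    have e2 : ((2:ℝ) ^ n : ℝ) = (2:ℝ) ^ ((n:ℝ)) := by
      rw [← Real.rpow_natCast 2 n]
    have goal_eq : (2:ℝ) ^ ((ℓ:ℝ)+1) * (2 * (n:ℝ)) * (2:ℝ) ^ ((n:ℝ) * H)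
        = (n:ℝ) * (2:ℝ) ^ ((n:ℝ) * (H - 1) + (ℓ:ℝ) + 2) * (2:ℝ) ^ ((n:ℝ)) := by
      conv_rhs => rw [mul_assoc, ← Real.rpow_add (by norm_num : (0:ℝ) < 2)]
      rw [show ((n:ℝ)*(H-1) + (ℓ:ℝ) + 2 + (n:ℝ)) = (((ℓ:ℝ)+1) + ((n:ℝ)*H)) + 1 by ring,
          Real.rpow_add (by norm_num : (0:ℝ) < 2), Real.rpow_add (by norm_num : (0:ℝ) < 2),
          Real.rpow_one]
      ring_nf
      rw [show (1:ℝ) + (n:ℝ)*H + (ℓ:ℝ) = (n:ℝ)*H + (ℓ:ℝ) + 1 by ring,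
          Real.rpow_add (by norm_num : (0:ℝ) < 2) ((n:ℝ)*H + (ℓ:ℝ)) 1,
          Real.rpow_add (by norm_num : (0:ℝ) < 2) ((n:ℝ)*H) (ℓ:ℝ), Real.rpow_one]
      ring
    rw [e1, e2]
    exact goal_eq
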